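/- arXiv:math/0512019 — 6 statements merged into one kernel-verified Lean document; each statement's English description precedes it below -/
import Mathlib

section
/- Let F be a finite family of nonempty sets with 2-colorability defect cd_2(F) = r. Then any proper coloring of the general Kneser graph KG(F) with colors 1,...,m contains a completely multicolored complete bipartite subgraph K_{⌈r/2⌉,⌊r/2⌋} whose r distinct colors alternate between the two sides with respect to their natural order (i.e., there exist colors i_1 < i_2 < ... < i_r such that the vertices colored i_j with j odd form one side and those with j even form the other side). -/
open Finset

/-- The general Kneser graph of a finite set system: vertices are the members
of the family, two sets adjacent iff they are disjoint (and distinct). -/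
def kneserGraph {α : Type*} [DecidableEq α] (𝓕 : Finset (Finset α)) :
    SimpleGraph {F // F ∈ 𝓕} where
  Adj A B := A ≠ B ∧ Disjoint (A : Finset α) (B : Finset α)
  symm := by
    constructor
    intro A B hAB
    exact ⟨hAB.1.symm, hAB.2.symm⟩
  loopless := ⟨fun A hA => hA.1 rfl⟩

/-- The 2-colorability defect of a finite set system: the minimum number of
points to delete so that the sets avoiding the deleted points can be 2-colored
with no set monochromatic. -/
noncomputable def cdTwo {α : Type*} [DecidableEq α] (𝓕 : Finset (Finset α)) : ℕ :=
  sInf {k | ∃ Y : Finset α, Y.card = k ∧ ∃ c : α → Fin 2,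
    ∀ F ∈ 𝓕, Disjoint F Y → (∃ a ∈ F, c a = 0) ∧ (∃ b ∈ F, c b = 1)}

/-!
Label a signed set `(P, N)` of points of the ground set by `±(n - r + 1 + j)`, where `j` is the
largest colour of a member of `𝓕` lying inside `P` or `N`, the sign telling which; when no member
fits, `cd₂(𝓕) = r` forces `#(P ∪ N) ≤ n - r`, and the label is `±#(P ∪ N)`, signed by the side of
the least point. On the barycentric subdivision of the boundary of the `n`-dimensional
cross-polytope this labelling is antipodal without complementary edges, so by Ky Fan's lemma some
maximal simplex carries labels which, sorted by absolute value, alternate in sign starting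
positive. Its label of rank `p` has absolute value `> p`, so the top `r` labels are colour labels
with increasing colours on alternating sides of the flag, and members on opposite sides are
disjoint.

Fan's lemma (the number of such simplices is odd) goes by induction on `n`. Count the positively
alternating facets of simplices in the upper hemisphere: by simplex, a degree lemma gives the
parity of the number of alternating simplices; by facet, each one off the equator lies in exactly
two such simplices, and those on the equator are the alternating simplices of dimension `n - 1`.
-/

namespace KyFan

open scoped Classical

def HasSign (b : Bool) (a : ℤ) : Prop := if b then 0 < a else a < 0

lemma HasSign.ne_zero {b : Bool} {a : ℤ} (h : HasSign b a) : a ≠ 0 := by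
  cases b <;> simp [HasSign] at h <;> omega

lemma hasSign_not_iff {b : Bool} {a : ℤ} (ha : a ≠ 0) : HasSign (!b) a ↔ ¬HasSign b a := by
  cases b <;> simp [HasSign] <;> omega

lemma hasSign_neg_iff {b : Bool} {a : ℤ} : HasSign b (-a) ↔ HasSign (!b) a := by
  cases b <;> simp [HasSign]

def Alternating : Bool → List ℤ → Prop
  | _, [] => True
  | b, a :: t => HasSign b a ∧ (∀ c ∈ t, |a| < |c|) ∧ Alternating (!b) t

@[simp] lemma alternating_nil (b : Bool) : Alternating b [] := trivial

lemma alternating_cons {b : Bool} {a : ℤ} {t : List ℤ} :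
    Alternating b (a :: t) ↔ HasSign b a ∧ (∀ c ∈ t, |a| < |c|) ∧ Alternating (!b) t :=
  Iff.rfl

lemma Alternating.pairwise : ∀ {b : Bool} {l : List ℤ}, Alternating b l → l.Pairwise (|·| < |·|)
  | _, [], _ => .nil
  | _, _ :: _, ⟨_, hlt, ht⟩ => .cons hlt ht.pairwise

lemma Alternating.eq_nil_of_not {b : Bool} {l : List ℤ} (h : Alternating b l)
    (h' : Alternating (!b) l) : l = [] := by
  cases l with
  | nil => rfl
  | cons a t => exact absurd h.1 ((hasSign_not_iff h.1.ne_zero).1 h'.1)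

lemma alternating_map_neg : ∀ {b : Bool} {l : List ℤ},
    Alternating b (l.map (-·)) ↔ Alternating (!b) l
  | _, [] => by simp
  | b, a :: t => by
    simp only [List.map_cons, alternating_cons, hasSign_neg_iff, List.forall_mem_map, abs_neg,
      alternating_map_neg (l := t), Bool.not_not]

lemma Alternating.hasSign_getElem : ∀ {b : Bool} {l : List ℤ}, Alternating b l →
    ∀ p (hp : p < l.length), HasSign (if Even p then b else !b) l[p]
  | _, a :: _, h, 0, _ => by simpa using h.1
  | b, a :: t, h, p + 1, hp => by
    have := h.2.2.hasSign_getElem p (by simpa using hp)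
    cases b <;> by_cases hp : Even p <;> simp_all [Nat.even_add_one]

lemma Alternating.lt_abs_getElem {b : Bool} {l : List ℤ} (h : Alternating b l) :
    ∀ p (hp : p < l.length), (p : ℤ) < |l[p]|
  | 0, hp => by
    cases l with
    | nil => simp at hp
    | cons a t => simpa using h.1.ne_zero
  | p + 1, hp => by
    have h₁ := h.lt_abs_getElem p (by omega)
    have h₂ := List.pairwise_iff_getElem.1 h.pairwise p (p + 1) (by omega) hp (by omega)
    push_cast
    omega

def IsAlternating (b : Bool) (M : Multiset ℤ) : Prop :=
  ∃ l : List ℤ, Alternating b l ∧ (l : Multiset ℤ) = M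

lemma isAlternating_coe_iff {b : Bool} {l : List ℤ} (hl : l.Pairwise (|·| < |·|)) :
    IsAlternating b l ↔ Alternating b l := by
  refine ⟨fun ⟨l', h', hl'⟩ => ?_, fun h => ⟨l, h, rfl⟩⟩
  have : Std.Antisymm (fun x y : ℤ => |x| < |y|) := ⟨fun _ _ h h' => absurd h' h.not_gt⟩
  rwa [← List.Perm.eq_of_pairwise' h'.pairwise hl (Multiset.coe_eq_coe.1 hl')]

lemma IsAlternating.nodup {b : Bool} {M : Multiset ℤ} (h : IsAlternating b M) : M.Nodup := by
  obtain ⟨l, hl, rfl⟩ := h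
  exact hl.pairwise.imp fun hlt heq => (heq ▸ hlt).false

lemma IsAlternating.eq_zero_of_not {b : Bool} {M : Multiset ℤ} (h : IsAlternating b M)
    (h' : IsAlternating (!b) M) : M = 0 := by
  obtain ⟨l, hl, rfl⟩ := h
  have := hl.eq_nil_of_not ((isAlternating_coe_iff hl.pairwise).1 h')
  simp [this]

lemma isAlternating_map_neg {b : Bool} {M : Multiset ℤ} :
    IsAlternating b (M.map (-·)) ↔ IsAlternating (!b) M := by
  constructor
  · rintro ⟨l, hl, hlM⟩
    refine ⟨l.map (-·), alternating_map_neg.1 (by simpa using hl), ?_⟩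
    rw [← Multiset.map_coe, hlM, Multiset.map_map]
    simp
  · rintro ⟨l, hl, rfl⟩
    exact ⟨l.map (-·), alternating_map_neg.2 (by simpa using hl), rfl⟩

lemma countP_alternating_erase_cons {b : Bool} {a : ℤ} {t : List ℤ} (hat : a ∉ t)
    (hlt : ∀ c ∈ t, |a| < |c|) :
    (a :: t).countP (fun x => Alternating b ((a :: t).erase x)) =
      (if HasSign b a then t.countP (fun x => Alternating (!b) (t.erase x)) else 0) +
        if Alternating b t then 1 else 0 := by
  have htail : ∀ x ∈ t, Alternating b ((a :: t).erase x) ↔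
      HasSign b a ∧ Alternating (!b) (t.erase x) := fun x hx => by
    rw [List.erase_cons_tail (by simpa using (ne_of_mem_of_not_mem hx hat).symm),
      alternating_cons]
    exact ⟨fun h => ⟨h.1, h.2.2⟩, fun h => ⟨h.1, fun c hc => hlt c (List.erase_subset hc), h.2⟩⟩
  rw [List.countP_cons, List.erase_cons_head,
    List.countP_congr (q := fun x => HasSign b a ∧ Alternating (!b) (t.erase x))
      (by simpa using htail)]
  by_cases hb : HasSign b a <;> simp [hb]

lemma odd_countP_alternating_erase_iff : ∀ {b : Bool} {l : List ℤ}, l ≠ [] →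
    l.Pairwise (|·| < |·|) → 0 ∉ l →
    (Odd (l.countP fun x => Alternating b (l.erase x)) ↔ Alternating b l ∨ Alternating (!b) l)
  | _, [], hl, _, _ => absurd rfl hl
  | b, a :: t, _, hs, h0 => by
    obtain ⟨hlt, hst⟩ := List.pairwise_cons.1 hs
    have ha0 : a ≠ 0 := fun h => h0 (h ▸ List.mem_cons_self)
    have hat : a ∉ t := fun h => (hlt a h).false
    rw [countP_alternating_erase_cons hat hlt]
    by_cases hb : HasSign b a
    · have hb' : ¬HasSign (!b) a := (hasSign_not_iff ha0).not.2 (not_not.2 hb)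
      have hrhs : Alternating b (a :: t) ∨ Alternating (!b) (a :: t) ↔ Alternating (!b) t := by
        simp only [alternating_cons, hb, hb', true_and, false_and, or_false]
        exact and_iff_right hlt
      rw [hrhs, if_pos hb]
      rcases eq_or_ne t [] with rfl | ht
      · simp
      have IH := odd_countP_alternating_erase_iff (b := !b) ht hst (fun h => h0 (.tail _ h))
      rw [Bool.not_not] at IH
      have hexcl : ¬(Alternating b t ∧ Alternating (!b) t) := fun h => ht (h.1.eq_nil_of_not h.2)
      by_cases h₁ : Alternating b t <;> by_cases h₂ : Alternating (!b) t <;>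
        simp_all [Nat.odd_add_one]
    · have hb' : HasSign (!b) a := (hasSign_not_iff ha0).2 hb
      have hrhs : Alternating b (a :: t) ∨ Alternating (!b) (a :: t) ↔ Alternating b t := by
        simp only [alternating_cons, hb, hb', true_and, false_and, false_or, Bool.not_not]
        exact and_iff_right hlt
      rw [hrhs, if_neg hb]
      by_cases h : Alternating b t <;> simp [h]

lemma exists_coe_eq_pairwise_abs_lt {M : Multiset ℤ} (hnd : M.Nodup) (hneg : ∀ x ∈ M, -x ∉ M) :
    ∃ l : List ℤ, (l : Multiset ℤ) = M ∧ l.Pairwise (|·| < |·|) := by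
  obtain ⟨l, rfl⟩ := Quotient.exists_rep M
  set s := l.mergeSort fun x y => decide (|x| ≤ |y|)
  have hperm : s.Perm l := List.mergeSort_perm _ _
  have hle : s.Pairwise fun x y => |x| ≤ |y| := by
    simpa using List.pairwise_mergeSort (le := fun x y : ℤ => decide (|x| ≤ |y|))
      (by simpa using fun _ _ _ => le_trans) (by simpa using fun _ _ => le_total _ _) l
  refine ⟨s, Multiset.coe_eq_coe.2 hperm, (hle.and (hperm.nodup_iff.2 hnd)).imp_of_mem ?_⟩
  rintro x y hx hy ⟨hxy, hne⟩
  refine hxy.lt_of_ne fun habs => ?_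
  rcases abs_eq_abs.1 habs with rfl | rfl
  · exact hne rfl
  · exact hneg y (hperm.subset hy) (by simpa using hperm.subset hx)

lemma odd_countP_isAlternating_erase_iff_of_nodup {M : Multiset ℤ} (hM : M ≠ 0) (hnd : M.Nodup)
    (hneg : ∀ x ∈ M, -x ∉ M) :
    Odd (M.countP fun x => IsAlternating true (M.erase x)) ↔
      IsAlternating true M ∨ IsAlternating false M := by
  obtain ⟨l, rfl, hl⟩ := exists_coe_eq_pairwise_abs_lt hnd hneg
  have herase : ∀ x ∈ l, IsAlternating true ((l : Multiset ℤ).erase x) ↔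
      Alternating true (l.erase x) := fun x _ => by
    rw [Multiset.coe_erase, isAlternating_coe_iff (hl.sublist (List.erase_sublist))]
  rw [Multiset.coe_countP,
    List.countP_congr (q := fun x => Alternating true (l.erase x))
      fun x hx => decide_eq_true_iff.trans ((herase x hx).trans decide_eq_true_iff.symm),
    isAlternating_coe_iff hl,
    isAlternating_coe_iff hl]
  exact odd_countP_alternating_erase_iff (by simpa using hM) hl
    (fun h => hneg 0 (Multiset.mem_coe.2 h) (by simpa using h))

/-- A repeated value can only be erased profitably if it occurs exactly twice, and then it
contributes twice. -/
lemma even_countP_isAlternating_erase_of_not_nodup {M : Multiset ℤ} (hnd : ¬M.Nodup) :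
    Even (M.countP fun x => IsAlternating true (M.erase x)) := by
  obtain ⟨v, hv⟩ : ∃ v, 2 ≤ M.count v := by
    by_contra! h
    exact hnd (Multiset.nodup_iff_count_le_one.2 fun a => Nat.le_of_lt_succ (h a))
  have hcount_erase : ∀ w, IsAlternating true (M.erase w) → (M.erase w).count v ≤ 1 :=
    fun w h => Multiset.nodup_iff_count_le_one.1 h.nodup v
  have hw : ∀ w ∈ M, IsAlternating true (M.erase w) = (v = w ∧ IsAlternating true (M.erase v)) := by
    refine fun w _ => propext ⟨fun h => ?_, fun ⟨hwv, h⟩ => hwv ▸ h⟩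
    obtain rfl : w = v := by
      by_contra hwv
      have := hcount_erase w h
      rw [Multiset.count_erase_of_ne (Ne.symm hwv)] at this
      omega
    exact ⟨rfl, h⟩
  rw [Multiset.countP_congr rfl hw]
  by_cases h : IsAlternating true (M.erase v)
  · have := hcount_erase v h
    rw [Multiset.count_erase_self] at this
    simp only [h, and_true]
    change Even (M.count v)
    exact ⟨1, by omega⟩
  · simp [h]

lemma odd_countP_isAlternating_erase_iff {M : Multiset ℤ} (hM : M ≠ 0) (hneg : ∀ x ∈ M, -x ∉ M) :
    Odd (M.countP fun x => IsAlternating true (M.erase x)) ↔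
      IsAlternating true M ∨ IsAlternating false M := by
  by_cases hnd : M.Nodup
  · exact odd_countP_isAlternating_erase_iff_of_nodup hM hnd hneg
  · have hnot : ∀ b, ¬IsAlternating b M := fun b h => hnd h.nodup
    simpa [hnot] using even_countP_isAlternating_erase_of_not_nodup hnd

def extendPerm (n : ℕ) :
    Equiv.Perm (Fin n) ≃ {σ : Equiv.Perm (Fin (n + 1)) // ∀ a, ¬a ≠ Fin.last n → σ a = a} :=
  (Equiv.permCongr (finSuccAboveEquiv (Fin.last n))).trans (Equiv.Perm.subtypeEquivSubtypePerm _)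

lemma extendPerm_castSucc {n : ℕ} (σ : Equiv.Perm (Fin n)) (j : Fin n) :
    (extendPerm n σ).1 j.castSucc = (σ j).castSucc := by
  simp only [extendPerm, Equiv.trans_apply, Equiv.Perm.subtypeEquivSubtypePerm_apply_coe]
  rw [Equiv.Perm.ofSubtype_apply_of_mem (p := (· ≠ Fin.last n)) _ (a := j.castSucc)
    (Fin.castSucc_ne_last j), Equiv.permCongr_apply]
  simp [finSuccAboveEquiv_apply, finSuccAboveEquiv_symm_apply_last]

lemma extendPerm_last {n : ℕ} (σ : Equiv.Perm (Fin n)) :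
    (extendPerm n σ).1 (Fin.last n) = Fin.last n :=
  (extendPerm n σ).2 _ (not_not.2 rfl)

lemma extendPerm_symm_castSucc {n : ℕ} (σ : Equiv.Perm (Fin n)) (j : Fin n) :
    (extendPerm n σ).1.symm j.castSucc = (σ.symm j).castSucc := by
  rw [Equiv.symm_apply_eq, extendPerm_castSucc, Equiv.apply_symm_apply]

lemma extendPerm_symm_last {n : ℕ} (σ : Equiv.Perm (Fin n)) :
    (extendPerm n σ).1.symm (Fin.last n) = Fin.last n := by
  rw [Equiv.symm_apply_eq, extendPerm_last]

/-- A maximal simplex of the barycentric subdivision of the boundary of the cross-polytope on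
`Fin n`: its `k`-th vertex is the signed set `(F.part true k, F.part false k)` of the first `k + 1`
coordinates in the order `F.2`, signed by `F.1`. -/
abbrev Flag (n : ℕ) := (Fin n → Bool) × Equiv.Perm (Fin n)

structure IsFanLabelling {n : ℕ} (lab : Finset (Fin n) → Finset (Fin n) → ℤ) : Prop where
  antipodal : ∀ P N, Disjoint P N → (P ∪ N).Nonempty → lab N P = -lab P N
  no_complementary_edge : ∀ P N P' N', Disjoint P' N' → (P ∪ N).Nonempty → P ⊆ P' → N ⊆ N' →
    lab P N ≠ -lab P' N'

def restrictLabelling {n : ℕ} (lab : Finset (Fin (n + 1)) → Finset (Fin (n + 1)) → ℤ)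
    (P N : Finset (Fin n)) : ℤ :=
  lab (P.map Fin.castSuccEmb) (N.map Fin.castSuccEmb)

lemma IsFanLabelling.restrict {n : ℕ} {lab : Finset (Fin (n + 1)) → Finset (Fin (n + 1)) → ℤ}
    (h : IsFanLabelling lab) : IsFanLabelling (restrictLabelling lab) where
  antipodal P N hd hne :=
    h.antipodal _ _ (disjoint_map _ |>.2 hd) (by rw [← map_union]; exact hne.map)
  no_complementary_edge P N P' N' hd hne hP hN :=
    h.no_complementary_edge _ _ _ _ (disjoint_map _ |>.2 hd) (by rw [← map_union]; exact hne.map)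
      (map_subset_map.2 hP) (map_subset_map.2 hN)

namespace Flag

variable {n : ℕ} (lab : Finset (Fin n) → Finset (Fin n) → ℤ)

def part (F : Flag n) (b : Bool) (k : Fin n) : Finset (Fin n) :=
  {i | F.2.symm i ≤ k ∧ F.1 i = b}

lemma mem_part {F : Flag n} {b : Bool} {k i : Fin n} :
    i ∈ F.part b k ↔ F.2.symm i ≤ k ∧ F.1 i = b := by
  simp [part]

lemma disjoint_part (F : Flag n) {b b' : Bool} (hbb' : b ≠ b') (k k' : Fin n) :
    Disjoint (F.part b k) (F.part b' k') :=
  disjoint_left.2 fun _ hi hi' => hbb' ((mem_part.1 hi).2.symm.trans (mem_part.1 hi').2)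

lemma part_union_part_nonempty (F : Flag n) (k : Fin n) :
    (F.part true k ∪ F.part false k).Nonempty :=
  ⟨F.2 k, by cases h : F.1 (F.2 k) <;> simp [mem_part, h]⟩

lemma part_mono (F : Flag n) (b : Bool) : Monotone (F.part b) :=
  fun _ _ hkk' _ hi => mem_part.2 ⟨(mem_part.1 hi).1.trans hkk', (mem_part.1 hi).2⟩

def label (F : Flag n) (k : Fin n) : ℤ := lab (F.part true k) (F.part false k)

def labels (F : Flag n) : Multiset ℤ := univ.val.map (F.label lab)

def faceLabels (F : Flag n) (k : Fin n) : Multiset ℤ := (univ.val.erase k).map (F.label lab)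

lemma card_labels (F : Flag n) : Multiset.card (F.labels lab) = n := by
  simp [labels]

lemma faceLabels_eq_erase (F : Flag n) (k : Fin n) :
    F.faceLabels lab k = (F.labels lab).erase (F.label lab k) := by
  obtain ⟨s, hs⟩ := Multiset.exists_cons_of_mem (mem_univ_val k)
  rw [faceLabels, labels, hs, Multiset.erase_cons_head, Multiset.map_cons,
    Multiset.erase_cons_head]

lemma card_filter_faceLabels (F : Flag n) :
    #{k | IsAlternating true (F.faceLabels lab k)} =
      (F.labels lab).countP fun x => IsAlternating true ((F.labels lab).erase x) := by
  conv_rhs => rw [labels, Multiset.countP_map]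
  simp only [faceLabels_eq_erase, ← card_val, filter_val, labels]

lemma neg_notMem_labels {lab : Finset (Fin n) → Finset (Fin n) → ℤ} (h : IsFanLabelling lab)
    (F : Flag n) : ∀ x ∈ F.labels lab, -x ∉ F.labels lab := by
  have key : ∀ j k, j ≤ k → F.label lab j ≠ -F.label lab k := fun j k hjk =>
    h.no_complementary_edge _ _ _ _ (F.disjoint_part (by decide) k k)
      (F.part_union_part_nonempty j)
      (F.part_mono true hjk) (F.part_mono false hjk)
  simp only [labels, Multiset.mem_map, mem_univ_val, true_and]
  rintro _ ⟨j, rfl⟩ ⟨k, hk⟩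
  rcases le_total j k with hjk | hkj
  · exact key j k hjk (by rw [hk, neg_neg])
  · exact key k j hkj hk

def antipode (F : Flag n) : Flag n := (fun i => !F.1 i, F.2)

lemma part_antipode (F : Flag n) (b : Bool) (k : Fin n) :
    F.antipode.part b k = F.part (!b) k := by
  ext i
  cases b <;> simp [mem_part, antipode]

lemma antipode_antipode (F : Flag n) : F.antipode.antipode = F := by
  simp [antipode]

lemma labels_antipode {lab : Finset (Fin n) → Finset (Fin n) → ℤ} (h : IsFanLabelling lab)
    (F : Flag n) : F.antipode.labels lab = (F.labels lab).map (-·) := by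
  simp only [labels, Multiset.map_map]
  refine Multiset.map_congr rfl fun k _ => ?_
  simp only [label, part_antipode, Bool.not_true, Bool.not_false, Function.comp_apply]
  rw [h.antipodal _ _ (F.disjoint_part (by decide) k k) (F.part_union_part_nonempty k)]

/-- The flag sharing with `F` every vertex but the `k`-th. -/
def pivot (F : Flag n) (k : Fin n) : Flag n :=
  if h : (k : ℕ) + 1 < n then (F.1, F.2 * Equiv.swap k ⟨k + 1, h⟩)
  else (Function.update F.1 (F.2 k) (!F.1 (F.2 k)), F.2)

lemma part_pivot (F : Flag n) {j k : Fin n} (hjk : j ≠ k) (b : Bool) :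
    (F.pivot k).part b j = F.part b j := by
  have hjk' : (j : ℕ) ≠ k := Fin.val_ne_of_ne hjk
  unfold pivot
  split_ifs with h
  · ext i
    simp only [mem_part, Equiv.Perm.mul_def, Equiv.symm_trans_apply, Equiv.symm_swap]
    rw [Equiv.swap_apply_def]
    split_ifs with h₁ h₂
    all_goals simp only [Fin.ext_iff, Fin.le_iff_val_le_val] at *
    all_goals exact and_congr_left fun _ => by omega
  · ext i
    simp only [mem_part]
    rcases eq_or_ne i (F.2 k) with rfl | hi
    · simp only [Equiv.symm_apply_apply, Fin.le_iff_val_le_val]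
      omega
    · rw [Function.update_of_ne hi]

lemma faceLabels_pivot (F : Flag n) (k : Fin n) :
    (F.pivot k).faceLabels lab k = F.faceLabels lab k :=
  Multiset.map_congr rfl fun j hj => by
    have hjk : j ≠ k := ((Multiset.Nodup.mem_erase_iff univ.nodup).1 hj).1
    simp only [label, part_pivot F hjk]

lemma pivot_pivot (F : Flag n) (k : Fin n) : (F.pivot k).pivot k = F := by
  unfold pivot
  split_ifs <;> simp [mul_assoc]

lemma pivot_ne (F : Flag n) (k : Fin n) : F.pivot k ≠ F := by
  unfold pivot
  split_ifs with h
  · intro heq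
    have := congrArg (fun σ : Equiv.Perm (Fin n) => σ k) (congrArg Prod.snd heq)
    simp [Fin.ext_iff] at this
  · intro heq
    have := congrFun (congrArg Prod.fst heq) (F.2 k)
    simp at this

lemma pivot_last_snd (F : Flag (n + 1)) : (F.pivot (Fin.last n)).2 = F.2 := by
  simp [pivot]

lemma pivot_fst_last (F : Flag (n + 1)) {k : Fin (n + 1)}
    (h : ¬(k = Fin.last n ∧ F.2 (Fin.last n) = Fin.last n)) :
    (F.pivot k).1 (Fin.last n) = F.1 (Fin.last n) := by
  unfold pivot
  split_ifs with hk
  · rfl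
  · obtain rfl : k = Fin.last n := Fin.ext (by have := k.isLt; simp; omega)
    exact Function.update_of_ne (fun h' => h ⟨rfl, h'.symm⟩) _ _

def extend (F : Flag n) : Flag (n + 1) := (Fin.snoc F.1 true, (extendPerm n F.2).1)

lemma part_extend (F : Flag n) (b : Bool) (j : Fin n) :
    F.extend.part b j.castSucc = (F.part b j).map Fin.castSuccEmb := by
  ext i
  cases i using Fin.lastCases with
  | last =>
    simp [mem_part, extend, extendPerm_symm_last, Fin.castSucc_lt_last j |>.not_ge,
      Fin.castSucc_ne_last]
  | cast i => simp [mem_part, extend, extendPerm_symm_castSucc]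

lemma extend_injective : Function.Injective (extend (n := n)) := by
  intro F G h
  have h₁ := congrArg (fun F : Flag (n + 1) => Fin.init F.1) h
  have h₂ := Subtype.ext (congrArg Prod.snd h)
  simp only [extend, Fin.init_snoc] at h₁
  exact Prod.ext h₁ ((extendPerm n).injective h₂)

lemma exists_extend_eq (F : Flag (n + 1)) (h₁ : F.1 (Fin.last n) = true)
    (h₂ : F.2 (Fin.last n) = Fin.last n) : ∃ G : Flag n, G.extend = F :=
  ⟨(Fin.init F.1, (extendPerm n).symm ⟨F.2, fun a ha => not_not.1 ha ▸ h₂⟩),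
    Prod.ext (by simp [extend, ← h₁]) (by simp [extend])⟩

lemma faceLabels_extend (lab : Finset (Fin (n + 1)) → Finset (Fin (n + 1)) → ℤ) (F : Flag n) :
    F.extend.faceLabels lab (Fin.last n) = F.labels (restrictLabelling lab) := by
  have huniv : (univ : Finset (Fin (n + 1))).val.erase (Fin.last n) =
      (univ.map Fin.castSuccEmb).val := by
    rw [← erase_val]
    congr 1
    ext i
    cases i using Fin.lastCases <;> simp [Fin.castSucc_ne_last]
  rw [faceLabels, huniv, map_val, Multiset.map_map, labels]
  exact Multiset.map_congr rfl fun j _ => by simp [label, restrictLabelling, part_extend]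

end Flag

lemma even_card_of_involution {β : Type*} {s : Finset β} (g : β → β) (hmem : ∀ x ∈ s, g x ∈ s)
    (hinv : ∀ x ∈ s, g (g x) = x) (hne : ∀ x ∈ s, g x ≠ x) : Even #s := by
  have : ∑ _ ∈ s, (1 : ZMod 2) = 0 :=
    sum_involution (fun x _ => g x) (fun _ _ => by decide) (fun x hx _ => hne x hx) hmem hinv
  simpa [ZMod.natCast_eq_zero_iff_even] using this

section

variable {n : ℕ} (lab : Finset (Fin (n + 1)) → Finset (Fin (n + 1)) → ℤ)

/-- `(F, k)` stands for the face of `F` opposite its `k`-th vertex; `F.1 (Fin.last n) = true` puts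
`F` in the upper hemisphere. -/
noncomputable def alternatingFacets : Finset (Flag (n + 1) × Fin (n + 1)) :=
  {x | x.1.1 (Fin.last n) = true ∧ IsAlternating true (x.1.faceLabels lab x.2)}

lemma mem_alternatingFacets {x : Flag (n + 1) × Fin (n + 1)} : x ∈ alternatingFacets lab ↔
    x.1.1 (Fin.last n) = true ∧ IsAlternating true (x.1.faceLabels lab x.2) := by
  simp [alternatingFacets]

/-- The facet lies in the equator: it omits the top vertex, and the last coordinate comes last. -/
def OnEquator (x : Flag (n + 1) × Fin (n + 1)) : Prop :=
  x.2 = Fin.last n ∧ x.1.2 (Fin.last n) = Fin.last n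

lemma card_alternatingFacets_onEquator :
    #{x ∈ alternatingFacets lab | OnEquator x} =
      #{F : Flag n | IsAlternating true (F.labels (restrictLabelling lab))} := by
  symm
  refine card_bij (fun F _ => (F.extend, Fin.last n)) ?_
    (fun F _ G _ h => Flag.extend_injective (congrArg Prod.fst h)) ?_
  · intro F hF
    rw [mem_filter, mem_alternatingFacets]
    replace hF := (mem_filter.1 hF).2
    exact ⟨⟨Fin.snoc_last (α := fun _ => Bool) _ _, by rwa [Flag.faceLabels_extend]⟩, rfl,
      extendPerm_last _⟩
  · rintro ⟨F, k⟩ hx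
    rw [mem_filter, mem_alternatingFacets] at hx
    obtain ⟨⟨hup, halt⟩, rfl, hσ⟩ := hx
    obtain ⟨G, rfl⟩ := F.exists_extend_eq hup hσ
    exact ⟨G, by simpa [Flag.faceLabels_extend] using halt, rfl⟩

lemma even_card_alternatingFacets_not_onEquator :
    Even #{x ∈ alternatingFacets lab | ¬OnEquator x} := by
  refine even_card_of_involution (fun x => (x.1.pivot x.2, x.2)) ?_
    (fun x _ => by simp [Flag.pivot_pivot]) (fun x _ h => x.1.pivot_ne x.2 (congrArg Prod.fst h))
  rintro ⟨F, k⟩ hx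
  rw [mem_filter, mem_alternatingFacets] at hx ⊢
  obtain ⟨⟨hup, halt⟩, hnot⟩ := hx
  refine ⟨⟨by rw [F.pivot_fst_last hnot, hup], by rwa [Flag.faceLabels_pivot]⟩, ?_⟩
  rintro ⟨rfl, h⟩
  exact hnot ⟨rfl, by rwa [Flag.pivot_last_snd] at h⟩

lemma odd_card_alternatingFacets_iff {lab : Finset (Fin (n + 1)) → Finset (Fin (n + 1)) → ℤ}
    (h : IsFanLabelling lab) :
    Odd #(alternatingFacets lab) ↔ Odd #{F : Flag (n + 1) | F.1 (Fin.last n) = true ∧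
      (IsAlternating true (F.labels lab) ∨ IsAlternating false (F.labels lab))} := by
  have hsum : #(alternatingFacets lab) = ∑ F : Flag (n + 1),
      if F.1 (Fin.last n) = true then #{k | IsAlternating true (F.faceLabels lab k)} else 0 := by
    rw [alternatingFacets, card_filter, Fintype.sum_prod_type]
    refine sum_congr rfl fun F _ => ?_
    split_ifs with hF
    · simp only [hF, true_and, card_filter]
    · simp [hF]
  rw [hsum, odd_sum_iff_odd_card_odd]
  congr! 3 with F
  split_ifs with hF
  · rw [Flag.card_filter_faceLabels, odd_countP_isAlternating_erase_iff _ (F.neg_notMem_labels h)]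
    · simp [hF]
    · intro h0
      simpa [h0] using F.card_labels lab
  · simp [hF]

lemma card_isAlternating_labels_eq {lab : Finset (Fin (n + 1)) → Finset (Fin (n + 1)) → ℤ}
    (h : IsFanLabelling lab) :
    #{F : Flag (n + 1) | IsAlternating true (F.labels lab)} =
      #{F : Flag (n + 1) | F.1 (Fin.last n) = true ∧
        (IsAlternating true (F.labels lab) ∨ IsAlternating false (F.labels lab))} := by
  have hexcl : ∀ F : Flag (n + 1),
      ¬(IsAlternating true (F.labels lab) ∧ IsAlternating false (F.labels lab)) := by
    rintro F ⟨h₁, h₂⟩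
    simpa [h₁.eq_zero_of_not h₂] using F.card_labels lab
  have hanti : #{F : Flag (n + 1) | IsAlternating true (F.labels lab) ∧ ¬F.1 (Fin.last n) = true} =
      #{F : Flag (n + 1) | IsAlternating false (F.labels lab) ∧ F.1 (Fin.last n) = true} := by
    refine card_nbij' Flag.antipode Flag.antipode ?_ ?_ (fun F _ => F.antipode_antipode)
      (fun F _ => F.antipode_antipode) <;>
    · intro F hF
      simp only [coe_filter, Set.mem_ofPred_eq, Flag.labels_antipode h,
        isAlternating_map_neg] at hF ⊢
      simpa [Flag.antipode] using hF
  calc #{F : Flag (n + 1) | IsAlternating true (F.labels lab)}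
      = #{F : Flag (n + 1) | IsAlternating true (F.labels lab) ∧ F.1 (Fin.last n) = true} +
          #{F : Flag (n + 1) | IsAlternating true (F.labels lab) ∧ ¬F.1 (Fin.last n) = true} := by
        rw [← filter_filter, ← filter_filter, card_filter_add_card_filter_not]
    _ = _ := by
        rw [hanti, ← card_union_of_disjoint]
        · congr 1
          ext F
          simp only [mem_union, mem_filter, mem_univ, true_and]
          tauto
        · exact disjoint_filter.2 fun F _ h₁ h₂ => hexcl F ⟨h₁.1, h₂.1⟩

theorem odd_card_isAlternating_labels : ∀ {n : ℕ} {lab : Finset (Fin n) → Finset (Fin n) → ℤ},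
    IsFanLabelling lab → Odd #{F : Flag n | IsAlternating true (F.labels lab)}
  | 0, lab, _ => by
    rw [filter_true_of_mem fun F _ => ⟨[], trivial, by simp [Flag.labels]⟩]
    simp
  | n + 1, lab, h => by
    have hequator := odd_card_isAlternating_labels h.restrict
    rw [← card_alternatingFacets_onEquator] at hequator
    rw [card_isAlternating_labels_eq h, ← odd_card_alternatingFacets_iff h,
      ← card_filter_add_card_filter_not OnEquator]
    exact hequator.add_even (even_card_alternatingFacets_not_onEquator lab)

end

/-- `C P` stands for the set of colours of the members of the family lying inside `P`. -/
structure IsKneserColouring {n m : ℕ} (C : Finset (Fin n) → Finset (Fin m)) (d : ℕ) : Prop where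
  mono : Monotone C
  disjoint : ∀ P N, Disjoint P N → Disjoint (C P) (C N)
  card_le : ∀ P N, Disjoint P N → C P = ∅ → C N = ∅ → #(P ∪ N) ≤ d

def signedBy {β : Type*} [DecidableEq β] (A : Finset β) (x : β) (v : ℤ) : ℤ :=
  if x ∈ A then v else -v

section signedBy

variable {β : Type*} [DecidableEq β] {A B A' B' : Finset β} {x : β} {v : ℤ}

lemma signedBy_swap (hAB : Disjoint A B) (hx : x ∈ A ∪ B) : signedBy B x v = -signedBy A x v := by
  rcases mem_union.1 hx with hxA | hxB
  · simp [signedBy, hxA, disjoint_left.1 hAB hxA]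
  · simp [signedBy, hxB, disjoint_right.1 hAB hxB]

lemma abs_signedBy (hv : 0 ≤ v) : |signedBy A x v| = v := by
  unfold signedBy
  split_ifs <;> simp [abs_of_nonneg hv]

lemma signedBy_ne_neg (hv : 0 < v) (hA : A ⊆ A') (hB : B ⊆ B') (hAB' : Disjoint A' B')
    (hx : x ∈ A ∪ B) : signedBy A x v ≠ -signedBy A' x v := by
  unfold signedBy
  rcases mem_union.1 hx with hxA | hxB
  · rw [if_pos hxA, if_pos (hA hxA)]
    omega
  · have hxA' : x ∉ A' := disjoint_right.1 hAB' (hB hxB)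
    rw [if_neg (fun hxA => hxA' (hA hxA)), if_neg hxA']
    omega

end signedBy

section

variable {n m : ℕ} {C : Finset (Fin n) → Finset (Fin m)} {d : ℕ}

/-- Colour labels have absolute value `> d`, the others `≤ d`. -/
noncomputable def kneserLabel (C : Finset (Fin n) → Finset (Fin m)) (d : ℕ)
    (P N : Finset (Fin n)) : ℤ :=
  if h : (C P ∪ C N).Nonempty then
    signedBy (C P) ((C P ∪ C N).max' h) (d + ((C P ∪ C N).max' h : ℕ) + 1)
  else if h : (P ∪ N).Nonempty then signedBy P ((P ∪ N).min' h) #(P ∪ N)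
  else 0

lemma kneserLabel_antipodal (hC : IsKneserColouring C d) {P N : Finset (Fin n)}
    (hPN : Disjoint P N) : kneserLabel C d N P = -kneserLabel C d P N := by
  unfold kneserLabel
  simp only [union_comm (C N), union_comm N]
  split_ifs with hcol hne
  · exact signedBy_swap (hC.disjoint P N hPN) (max'_mem _ _)
  · exact signedBy_swap hPN (min'_mem _ _)
  · simp

lemma abs_kneserLabel_le (hC : IsKneserColouring C d) {P N : Finset (Fin n)} (hPN : Disjoint P N)
    (hcol : ¬(C P ∪ C N).Nonempty) : |kneserLabel C d P N| ≤ d := by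
  rw [not_nonempty_iff_eq_empty, union_eq_empty] at hcol
  have := hC.card_le P N hPN hcol.1 hcol.2
  unfold kneserLabel
  rw [dif_neg (by simp [hcol.1, hcol.2])]
  split_ifs
  · rw [abs_signedBy (by positivity)]
    exact_mod_cast this
  · simp

lemma kneserLabel_no_complementary_edge (hC : IsKneserColouring C d) {P N P' N' : Finset (Fin n)}
    (hd' : Disjoint P' N') (hne : (P ∪ N).Nonempty) (hP : P ⊆ P') (hN : N ⊆ N') :
    kneserLabel C d P N ≠ -kneserLabel C d P' N' := by
  have hd : Disjoint P N := hd'.mono hP hN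
  intro heq
  have habs := congrArg abs heq
  rw [abs_neg] at habs
  by_cases hcol' : (C P' ∪ C N').Nonempty
  · have habs' : |kneserLabel C d P' N'| = d + ((C P' ∪ C N').max' hcol' : ℕ) + 1 := by
      rw [kneserLabel, dif_pos hcol', abs_signedBy (by positivity)]
    by_cases hcol : (C P ∪ C N).Nonempty
    · have hmax : (C P ∪ C N).max' hcol = (C P' ∪ C N').max' hcol' := by
        rw [kneserLabel, dif_pos hcol, abs_signedBy (by positivity), habs'] at habs
        exact Fin.ext (by omega)
      rw [kneserLabel, dif_pos hcol, kneserLabel, dif_pos hcol', ← hmax] at heq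
      exact signedBy_ne_neg (by positivity) (hC.mono hP) (hC.mono hN) (hC.disjoint P' N' hd')
        (max'_mem _ _) heq
    · have := abs_kneserLabel_le hC hd hcol
      omega
  · have hcol : ¬(C P ∪ C N).Nonempty := fun h =>
      hcol' (h.mono (union_subset_union (hC.mono hP) (hC.mono hN)))
    have hne' := hne.mono (union_subset_union hP hN)
    rw [kneserLabel, dif_neg hcol, dif_pos hne, kneserLabel, dif_neg hcol', dif_pos hne']
      at heq habs
    rw [abs_signedBy (by positivity), abs_signedBy (by positivity)] at habs
    have hunion : P ∪ N = P' ∪ N' :=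
      eq_of_subset_of_card_le (union_subset_union hP hN) (by exact_mod_cast habs.ge)
    simp only [← hunion] at heq
    exact signedBy_ne_neg (by exact_mod_cast hne.card_pos) hP hN hd' (min'_mem _ _) heq

lemma IsKneserColouring.isFanLabelling (hC : IsKneserColouring C d) :
    IsFanLabelling (kneserLabel C d) where
  antipodal _ _ hPN _ := kneserLabel_antipodal hC hPN
  no_complementary_edge _ _ _ _ hd' hne hP hN := kneserLabel_no_complementary_edge hC hd' hne hP hN

lemma exists_colour_of_lt_abs_kneserLabel (hC : IsKneserColouring C d) {P N : Finset (Fin n)}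
    (hPN : Disjoint P N) (h : d < |kneserLabel C d P N|) :
    ∃ j : Fin m, |kneserLabel C d P N| = d + (j : ℕ) + 1 ∧
      j ∈ C (if 0 < kneserLabel C d P N then P else N) := by
  have hcol : (C P ∪ C N).Nonempty := by
    by_contra hcol
    exact (abs_kneserLabel_le hC hPN hcol).not_gt h
  set j := (C P ∪ C N).max' hcol
  have hval : kneserLabel C d P N = signedBy (C P) j (d + (j : ℕ) + 1) := by
    rw [kneserLabel, dif_pos hcol]
  refine ⟨j, by rw [hval, abs_signedBy (by positivity)], ?_⟩
  rw [hval, signedBy]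
  by_cases hjP : j ∈ C P
  · simp only [hjP, if_true]
    rw [if_pos (by positivity)]
    exact hjP
  · simp only [hjP, if_false]
    rw [if_neg (by omega)]
    exact (mem_union.1 (max'_mem _ hcol)).resolve_left hjP

/-- In a flag whose labels alternate, the entry of rank `p` has absolute value `> p`, so the top `r`
entries are colour labels: their colours increase and their sides alternate. -/
theorem IsKneserColouring.exists_flag_strictMono (hC : IsKneserColouring C d) {r : ℕ}
    (hdr : d + r = n) : ∃ F : Flag n, ∃ i : Fin r → Fin m, StrictMono i ∧
      ∃ k : Fin r → Fin n, ∀ t : Fin r, i t ∈ C (F.part (decide (Even (d + t))) (k t)) := by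
  obtain ⟨F, hF⟩ := card_pos.1 (odd_card_isAlternating_labels hC.isFanLabelling).pos
  obtain ⟨s, hs, hsF⟩ := (mem_filter.1 hF).2
  have hlen : s.length = n := by
    rw [← F.card_labels (kneserLabel C d), ← hsF, Multiset.coe_card]
  have hcol : ∀ t : Fin r, ∃ j : Fin m, ∃ k : Fin n,
      |s[d + t]'(by omega)| = d + (j : ℕ) + 1 ∧ j ∈ C (F.part (decide (Even (d + t))) k) := by
    intro t
    have hp : d + t < s.length := by omega
    obtain ⟨k, -, hk⟩ := Multiset.mem_map.1 (hsF ▸ Multiset.mem_coe.2 (s.getElem_mem hp))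
    simp only [Flag.label] at hk
    have hlt := hs.lt_abs_getElem _ hp
    rw [← hk] at hlt ⊢
    obtain ⟨j, hj, hjC⟩ := exists_colour_of_lt_abs_kneserLabel hC
      (F.disjoint_part (b := true) (b' := false) (by decide) k k) (by push_cast at hlt; omega)
    refine ⟨j, k, hj, ?_⟩
    have hsign := hs.hasSign_getElem _ hp
    rw [← hk] at hsign
    by_cases heven : Even (d + (t : ℕ)) <;>
      simp only [heven, if_true, if_false, HasSign] at hsign <;>
      simpa [heven, hsign, hsign.not_gt] using hjC
  choose i k hi using hcol
  refine ⟨F, i, fun t u htu => ?_, k, fun t => (hi t).2⟩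
  have := List.pairwise_iff_getElem.1 hs.pairwise (d + t) (d + u) (by omega) (by omega)
    (by simp only [Fin.lt_def] at htu; omega)
  rw [(hi t).1, (hi u).1] at this
  exact Fin.lt_def.2 (by omega)

end

section

variable {α : Type*} [DecidableEq α] (𝓕 : Finset (Finset α))

/-- Delete the points outside `S ∪ T` and colour `S` by `0`, the rest by `1`. -/
lemma cdTwo_le_card_sdiff (S T : Finset α) (h : ∀ F ∈ 𝓕, ¬F ⊆ S ∧ ¬F ⊆ T) :
    cdTwo 𝓕 ≤ #(𝓕.sup id \ (S ∪ T)) := by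
  refine Nat.sInf_le ⟨_, rfl, fun a => if a ∈ S then 0 else 1, fun F hF hdisj => ?_⟩
  have hsub : F ⊆ S ∪ T := fun a ha => by
    by_contra h'
    exact disjoint_left.1 hdisj ha (mem_sdiff.2 ⟨le_sup (f := id) hF ha, h'⟩)
  obtain ⟨a, haF, haT⟩ := not_subset.1 (h F hF).2
  obtain ⟨b, hbF, hbS⟩ := not_subset.1 (h F hF).1
  exact ⟨⟨a, haF, by simp [(mem_union.1 (hsub haF)).resolve_right haT]⟩, ⟨b, hbF, by simp [hbS]⟩⟩

lemma cdTwo_le_card_sup (hne : ∀ F ∈ 𝓕, F.Nonempty) : cdTwo 𝓕 ≤ #(𝓕.sup id) := by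
  simpa using cdTwo_le_card_sdiff 𝓕 ∅ ∅ fun F hF => by simp [(hne F hF).ne_empty]

lemma kneserGraph_adj_of_disjoint (hne : ∀ F ∈ 𝓕, F.Nonempty) {A B : {F // F ∈ 𝓕}}
    (h : Disjoint (A : Finset α) B) : (kneserGraph 𝓕).Adj A B :=
  ⟨fun hAB => (hne A A.2).ne_empty (disjoint_self.1 (hAB ▸ h)), h⟩

noncomputable def groundEmb : Fin #(𝓕.sup id) ↪ α :=
  (𝓕.sup id).equivFin.symm.toEmbedding.trans (Function.Embedding.subtype _)

lemma map_groundEmb_subset (P : Finset (Fin #(𝓕.sup id))) : P.map (groundEmb 𝓕) ⊆ 𝓕.sup id :=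
  fun _ hx => by
    obtain ⟨a, -, rfl⟩ := mem_map.1 hx
    exact ((𝓕.sup id).equivFin.symm a).2

noncomputable def colourSet {m : ℕ} (c : {F // F ∈ 𝓕} → Fin m) (P : Finset (Fin #(𝓕.sup id))) :
    Finset (Fin m) :=
  (univ.filter fun A : {F // F ∈ 𝓕} => (A : Finset α) ⊆ P.map (groundEmb 𝓕)).image c

lemma mem_colourSet {m : ℕ} {c : {F // F ∈ 𝓕} → Fin m} {P : Finset (Fin #(𝓕.sup id))} {j : Fin m} :
    j ∈ colourSet 𝓕 c P ↔ ∃ A : {F // F ∈ 𝓕}, (A : Finset α) ⊆ P.map (groundEmb 𝓕) ∧ c A = j := by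
  simp [colourSet]

lemma isKneserColouring_colourSet (hne : ∀ F ∈ 𝓕, F.Nonempty) {m : ℕ}
    (c : {F // F ∈ 𝓕} → Fin m) (hc : ∀ A B, (kneserGraph 𝓕).Adj A B → c A ≠ c B) :
    IsKneserColouring (colourSet 𝓕 c) (#(𝓕.sup id) - cdTwo 𝓕) where
  mono P P' hPP' j hj := by
    obtain ⟨A, hA, rfl⟩ := (mem_colourSet 𝓕).1 hj
    exact (mem_colourSet 𝓕).2 ⟨A, hA.trans (map_subset_map.2 hPP'), rfl⟩
  disjoint P N hPN := by
    refine disjoint_left.2 fun j hjP hjN => ?_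
    obtain ⟨A, hA, rfl⟩ := (mem_colourSet 𝓕).1 hjP
    obtain ⟨B, hB, hAB⟩ := (mem_colourSet 𝓕).1 hjN
    exact hc A B (kneserGraph_adj_of_disjoint 𝓕 hne (((disjoint_map _).2 hPN).mono hA hB)) hAB.symm
  card_le P N _ hP hN := by
    have h := cdTwo_le_card_sdiff 𝓕 (P.map (groundEmb 𝓕)) (N.map (groundEmb 𝓕)) fun F hF =>
      ⟨fun hFP => (mem_colourSet 𝓕).not.1 (hP ▸ notMem_empty (c ⟨F, hF⟩)) ⟨⟨F, hF⟩, hFP, rfl⟩,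
        fun hFN => (mem_colourSet 𝓕).not.1 (hN ▸ notMem_empty (c ⟨F, hF⟩)) ⟨⟨F, hF⟩, hFN, rfl⟩⟩
    rw [← map_union, card_sdiff_of_subset (map_groundEmb_subset 𝓕 _), card_map] at h
    have := card_le_univ (P ∪ N)
    simp only [Fintype.card_fin] at this
    omega

end

end KyFan

theorem stmt0 {α : Type*} [DecidableEq α] (𝓕 : Finset (Finset α))
    (hne : ∀ F ∈ 𝓕, F.Nonempty) (r m : ℕ) (hr : cdTwo 𝓕 = r)
    (c : {F // F ∈ 𝓕} → Fin m)
    (hc : ∀ A B, (kneserGraph 𝓕).Adj A B → c A ≠ c B) :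
    ∃ i : Fin r → Fin m, StrictMono i ∧
      ∃ v : Fin r → {F // F ∈ 𝓕},
        (∀ j, c (v j) = i j) ∧
        ∀ j k : Fin r, (j : ℕ) % 2 ≠ (k : ℕ) % 2 →
          (kneserGraph 𝓕).Adj (v j) (v k) := by
  have hrn : r ≤ #(𝓕.sup id) := hr ▸ KyFan.cdTwo_le_card_sup 𝓕 hne
  obtain ⟨F, i, hi, k, hik⟩ := (KyFan.isKneserColouring_colourSet 𝓕 hne c hc).exists_flag_strictMono
    (r := r) (by omega)
  choose v hv hcv using fun t => (KyFan.mem_colourSet 𝓕).1 (hik t)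
  refine ⟨i, hi, v, hcv, fun t u htu => KyFan.kneserGraph_adj_of_disjoint 𝓕 hne ?_⟩
  refine (((disjoint_map _).2 (F.disjoint_part ?_ (k t) (k u))).mono (hv t) (hv u))
  simp only [ne_eq, decide_eq_decide, Nat.even_iff]
  omega
end

section
/- Every finite graph G is isomorphic to the general Kneser graph KG(F) of some finite set system F. -/
open Finset

/- A vertex is represented by the non-edges at it, loops included: the loop `s(v, v)` makes the
representation injective, and `s(u, v)` lies in both sets exactly when `u` and `v` are not
adjacent. -/

noncomputable def kneserGraphIsoOfDisjoint {V α : Type*} [Fintype V] [DecidableEq α]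
    {G : SimpleGraph V} (S : V → Finset α) (hS : Function.Injective S)
    (hdisj : ∀ u v, Disjoint (S u) (S v) ↔ G.Adj u v) : G ≃g kneserGraph (univ.image S) where
  toEquiv := Equiv.ofBijective (fun v => ⟨S v, mem_image_of_mem S (mem_univ v)⟩)
    ⟨fun _ _ h => hS (congrArg Subtype.val h), fun ⟨_, hF⟩ =>
      let ⟨v, _, hv⟩ := mem_image.mp hF
      ⟨v, Subtype.ext hv⟩⟩
  map_rel_iff' {u v} := by
    change (⟨S u, _⟩ : {F // F ∈ univ.image S}) ≠ ⟨S v, _⟩ ∧ Disjoint (S u) (S v) ↔ G.Adj u v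
    rw [ne_eq, Subtype.mk.injEq, hS.eq_iff, hdisj]
    exact and_iff_right_of_imp G.ne_of_adj

namespace SimpleGraph

variable {V : Type*} [Fintype V] [DecidableEq V] (G : SimpleGraph V) [DecidableRel G.Adj]

def nonEdgesAt (v : V) : Finset (Sym2 V) := {e | v ∈ e ∧ e ∉ G.edgeSet}

variable {G}

@[simp]
lemma mem_nonEdgesAt {v : V} {e : Sym2 V} : e ∈ G.nonEdgesAt v ↔ v ∈ e ∧ e ∉ G.edgeSet := by
  simp [nonEdgesAt]

lemma nonEdgesAt_injective : Function.Injective G.nonEdgesAt := by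
  intro u v h
  have hloop : s(u, u) ∈ G.nonEdgesAt v := by
    rw [← h, mem_nonEdgesAt]
    exact ⟨Sym2.mem_mk_left u u, by simp⟩
  simpa [eq_comm] using (mem_nonEdgesAt.mp hloop).1

lemma disjoint_nonEdgesAt_iff {u v : V} :
    Disjoint (G.nonEdgesAt u) (G.nonEdgesAt v) ↔ G.Adj u v := by
  constructor
  · intro hdisj
    by_contra hadj
    have hu : s(u, v) ∈ G.nonEdgesAt u := by simpa using hadj
    exact Finset.disjoint_left.mp hdisj hu (by simpa using hadj)
  · intro hadj
    refine Finset.disjoint_left.mpr fun e heu hev => ?_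
    rw [mem_nonEdgesAt] at heu hev
    have he : e = s(u, v) := (Sym2.mem_and_mem_iff hadj.ne).mp ⟨heu.1, hev.1⟩
    exact heu.2 (he ▸ hadj)

end SimpleGraph

theorem stmt9_general {V : Type*} [Fintype V] (G : SimpleGraph V) :
    ∃ 𝓕 : Finset (Finset ℕ), Nonempty (G ≃g kneserGraph 𝓕) := by
  classical
  let code : Sym2 V ↪ ℕ := (Fintype.equivFin (Sym2 V)).toEmbedding.trans Fin.valEmbedding
  refine ⟨_, ⟨kneserGraphIsoOfDisjoint (fun v => (G.nonEdgesAt v).map code)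
    ((map_injective code).comp SimpleGraph.nonEdgesAt_injective) fun u v => ?_⟩⟩
  rw [disjoint_map, SimpleGraph.disjoint_nonEdgesAt_iff]

theorem stmt9 {V : Type*} [Fintype V] [DecidableEq V] (G : SimpleGraph V) :
    ∃ 𝓕 : Finset (Finset ℕ), Nonempty (G ≃g kneserGraph 𝓕) :=
  stmt9_general G
end

section
/- The body of the box complex B_0(K_n) of the complete graph K_n is Z_2-homeomorphic to the sphere S^{n-1} with the antipodal action. -/
open Finset

/-- The body of the box complex `B₀(G)`, realized concretely inside
`ℝ^(V × Bool)` as the set of convex-combination weight functions whose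
support `S ⊎ T` is a simplex of `B₀(G)`: the supports in the two copies are
disjoint and completely joined in `G` (both encoded by the adjacency
condition, since `G` is loopless). -/
def boxBody {V : Type*} [Fintype V] (G : SimpleGraph V) : Set (V × Bool → ℝ) :=
  {w | (∀ p, 0 ≤ w p) ∧ (∑ p, w p) = 1 ∧
    ∀ u v : V, 0 < w (u, false) → 0 < w (v, true) → G.Adj u v}

/-!
For `K_V` a point of the body is a weight `w` on `V × Bool` which, at each vertex, lives on at
most one of the two copies. The signed coordinates `y v = w (v, true) - w (v, false)` therefore
identify the body with the unit sphere of `ℓ¹(V)`, the inverse splitting `y` into its positive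
and negative parts, and swapping the copies becomes `y ↦ -y`. Radial projection then carries
the `ℓ¹` unit sphere onto the Euclidean one, commuting with the antipodal map.
-/

open Metric

namespace ContinuousLinearEquiv

variable {E F : Type*} [NormedAddCommGroup E] [NormedSpace ℝ E]
  [NormedAddCommGroup F] [NormedSpace ℝ F]

lemma norm_apply_ne_zero_of_mem_sphere (e : E ≃L[ℝ] F)
    (x : sphere (0 : E) 1) : ‖e x‖ ≠ 0 :=
  norm_ne_zero_iff.mpr (e.map_ne_zero_iff.mpr (ne_zero_of_mem_unit_sphere x))

lemma norm_inv_norm_smul_apply (e : E ≃L[ℝ] F) (x : sphere (0 : E) 1) :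
    ‖‖e x‖⁻¹ • e x‖ = 1 :=
  norm_smul_inv_norm (norm_ne_zero_iff.mp (e.norm_apply_ne_zero_of_mem_sphere x))

lemma inv_norm_smul_symm_inv_norm_smul_apply (e : E ≃L[ℝ] F)
    (x : sphere (0 : E) 1) :
    ‖e.symm (‖e x‖⁻¹ • e x)‖⁻¹ • e.symm (‖e x‖⁻¹ • e x) = x := by
  rw [map_smul, e.symm_apply_apply, norm_smul, norm_eq_of_mem_sphere, mul_one, norm_inv,
    norm_norm, inv_inv, smul_smul, mul_inv_cancel₀ (e.norm_apply_ne_zero_of_mem_sphere x),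
    one_smul]

noncomputable def sphereHomeomorph (e : E ≃L[ℝ] F) :
    sphere (0 : E) 1 ≃ₜ sphere (0 : F) 1 where
  toFun x := ⟨‖e x‖⁻¹ • e x, by simpa using e.norm_inv_norm_smul_apply x⟩
  invFun y := ⟨‖e.symm y‖⁻¹ • e.symm y, by simpa using e.symm.norm_inv_norm_smul_apply y⟩
  left_inv x := Subtype.ext (e.inv_norm_smul_symm_inv_norm_smul_apply x)
  right_inv y := Subtype.ext (e.symm.inv_norm_smul_symm_inv_norm_smul_apply y)
  continuous_toFun := by
    refine Continuous.subtype_mk ?_ _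
    fun_prop (disch := exact e.norm_apply_ne_zero_of_mem_sphere)
  continuous_invFun := by
    refine Continuous.subtype_mk ?_ _
    fun_prop (disch := exact e.symm.norm_apply_ne_zero_of_mem_sphere)

lemma sphereHomeomorph_neg (e : E ≃L[ℝ] F) (x : sphere (0 : E) 1) :
    e.sphereHomeomorph (-x) = -e.sphereHomeomorph x := by
  ext
  simp [sphereHomeomorph]

end ContinuousLinearEquiv

section BoxBodyTop

variable {V : Type*}

noncomputable def signedCoords (w : V × Bool → ℝ) : PiLp 1 (fun _ : V => ℝ) :=
  WithLp.toLp 1 fun v => w (v, true) - w (v, false)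

noncomputable def splitSigns (y : PiLp 1 (fun _ : V => ℝ)) : V × Bool → ℝ :=
  fun p => if p.2 then (y p.1)⁺ else (y p.1)⁻

lemma continuous_signedCoords : Continuous (signedCoords (V := V)) :=
  (PiLp.continuous_toLp 1 _).comp (by fun_prop)

lemma continuous_splitSigns : Continuous (splitSigns (V := V)) := by
  refine continuous_pi fun ⟨v, b⟩ => ?_
  have hv : Continuous fun y : PiLp 1 (fun _ : V => ℝ) => y v :=
    (continuous_apply v).comp (PiLp.continuous_ofLp 1 _)
  cases b
  · exact continuous_negPart.comp hv
  · exact continuous_posPart.comp hv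

@[simp] lemma signedCoords_apply (w : V × Bool → ℝ) (v : V) :
    signedCoords w v = w (v, true) - w (v, false) := rfl

lemma signedCoords_splitSigns (y : PiLp 1 (fun _ : V => ℝ)) :
    signedCoords (splitSigns y) = y := by
  ext v
  simp [splitSigns]

lemma signedCoords_swap (w : V × Bool → ℝ) :
    signedCoords (fun p => w (p.1, !p.2)) = -signedCoords w := by
  ext v
  simp

variable [Fintype V]

lemma eq_zero_or_eq_zero_of_mem_boxBody_top {w : V × Bool → ℝ} (hw : w ∈ boxBody ⊤) (v : V) :
    w (v, true) = 0 ∨ w (v, false) = 0 := by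
  by_contra! h
  exact (hw.2.2 v v ((hw.1 _).lt_of_ne' h.2) ((hw.1 _).lt_of_ne' h.1)).ne rfl

lemma splitSigns_signedCoords {w : V × Bool → ℝ} (hw : w ∈ boxBody ⊤) :
    splitSigns (signedCoords w) = w := by
  funext ⟨v, b⟩
  have h_true := hw.1 (v, true)
  have h_false := hw.1 (v, false)
  rcases eq_zero_or_eq_zero_of_mem_boxBody_top hw v with h | h <;> cases b <;>
    simp [splitSigns, h, h_true, h_false]

lemma norm_signedCoords {w : V × Bool → ℝ} (hw : w ∈ boxBody ⊤) : ‖signedCoords w‖ = 1 := by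
  have habs (v : V) : |w (v, true) - w (v, false)| = w (v, true) + w (v, false) := by
    have h_true := hw.1 (v, true)
    have h_false := hw.1 (v, false)
    rcases eq_zero_or_eq_zero_of_mem_boxBody_top hw v with h | h <;>
      simp [h, h_true, h_false, abs_of_nonneg]
  rw [PiLp.norm_eq_of_L1, ← hw.2.1, Fintype.sum_prod_type]
  simp [habs, add_comm]

lemma splitSigns_mem_boxBody {y : PiLp 1 (fun _ : V => ℝ)} (hy : ‖y‖ = 1) :
    splitSigns y ∈ boxBody ⊤ := by
  refine ⟨fun ⟨v, b⟩ => ?_, ?_, fun u v hu hv => ?_⟩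
  · cases b <;> simp [splitSigns, posPart_nonneg, negPart_nonneg]
  · rw [Fintype.sum_prod_type, ← hy, PiLp.norm_eq_of_L1]
    simp [splitSigns, posPart_add_negPart]
  · simp only [splitSigns, Bool.false_eq_true, if_false, if_true, negPart_pos_iff,
      posPart_pos_iff] at hu hv
    exact (SimpleGraph.top_adj u v).mpr (by rintro rfl; linarith)

noncomputable def boxBodyTopHomeomorphSphere :
    boxBody (⊤ : SimpleGraph V) ≃ₜ sphere (0 : PiLp 1 (fun _ : V => ℝ)) 1 where
  toFun w := ⟨signedCoords w, mem_sphere_zero_iff_norm.mpr (norm_signedCoords w.2)⟩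
  invFun y := ⟨splitSigns y, splitSigns_mem_boxBody (mem_sphere_zero_iff_norm.mp y.2)⟩
  left_inv w := Subtype.ext (splitSigns_signedCoords w.2)
  right_inv y := Subtype.ext (signedCoords_splitSigns y.1)
  continuous_toFun := (continuous_signedCoords.comp continuous_subtype_val).subtype_mk _
  continuous_invFun := (continuous_splitSigns.comp continuous_subtype_val).subtype_mk _

lemma boxBodyTopHomeomorphSphere_swap {w w' : boxBody (⊤ : SimpleGraph V)}
    (h : (w' : V × Bool → ℝ) = fun p => (w : V × Bool → ℝ) (p.1, !p.2)) :
    boxBodyTopHomeomorphSphere w' = -boxBodyTopHomeomorphSphere w :=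
  Subtype.ext (by simp [boxBodyTopHomeomorphSphere, h, signedCoords_swap])

end BoxBodyTop

theorem stmt12_general (n : ℕ) :
    ∃ φ : boxBody (⊤ : SimpleGraph (Fin n)) ≃ₜ
        Metric.sphere (0 : EuclideanSpace ℝ (Fin n)) 1,
      ∀ w w' : boxBody (⊤ : SimpleGraph (Fin n)),
        ((w' : Fin n × Bool → ℝ) = fun p => (w : Fin n × Bool → ℝ) (p.1, !p.2)) →
        (φ w' : EuclideanSpace ℝ (Fin n)) = -(φ w : EuclideanSpace ℝ (Fin n)) := by
  let e : PiLp 1 (fun _ : Fin n => ℝ) ≃L[ℝ] EuclideanSpace ℝ (Fin n) :=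
    (PiLp.continuousLinearEquiv 1 ℝ _).trans (PiLp.continuousLinearEquiv 2 ℝ _).symm
  refine ⟨boxBodyTopHomeomorphSphere.trans e.sphereHomeomorph, fun w w' h => ?_⟩
  simp [boxBodyTopHomeomorphSphere_swap h, e.sphereHomeomorph_neg]

/-- `‖B₀(Kₙ)‖` is `ℤ₂`-homeomorphic to the sphere `S^{n-1}` with the
antipodal action. -/
theorem stmt12 (n : ℕ) (hn : 1 ≤ n) :
    ∃ φ : boxBody (⊤ : SimpleGraph (Fin n)) ≃ₜ
        Metric.sphere (0 : EuclideanSpace ℝ (Fin n)) 1,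
      ∀ w w' : boxBody (⊤ : SimpleGraph (Fin n)),
        ((w' : Fin n × Bool → ℝ) = fun p => (w : Fin n × Bool → ℝ) (p.1, !p.2)) →
        (φ w' : EuclideanSpace ℝ (Fin n)) = -(φ w : EuclideanSpace ℝ (Fin n)) :=
  stmt12_general n
end

section
/- Let F be a finite family of nonempty sets with cd_2(F) = r ≥ 1. Then coind(B_0(KG(F))) ≥ r - 1, i.e., there is a Z_2-map from S^{r-1} to the body of the box complex B_0(KG(F)). -/
open Finset

open Finset

/-- There is a `ℤ₂`-map from the sphere `S^h` to `‖B₀(G)‖`, where the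
involution on the body interchanges the two copies of `V`.  Thus
`coind(B₀(G)) ≥ h`. -/
def hasZ2Map {V : Type*} [Fintype V] (h : ℕ) (G : SimpleGraph V) : Prop :=
  ∃ f : Metric.sphere (0 : EuclideanSpace ℝ (Fin (h + 1))) 1 → (V × Bool → ℝ),
    Continuous f ∧ (∀ x, f x ∈ boxBody G) ∧
    ∀ x, f (-x) = fun p => f x (p.1, !p.2)

/-!
Label the points of the ground set by distinct reals `t a`. A point `x` of `S^(r-1) ⊆ ℝ^r` gives
the nonzero polynomial `p_x(s) = ∑ xᵢ sⁱ` of degree `< r`, which vanishes at fewer than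
`r = cd₂(𝓕)` labels (Vandermonde). Hence coloring the remaining points by the sign of `p_x`
leaves some `F ∈ 𝓕` monochromatic. The positive parts of `min_{a ∈ F} ± p_x(t a)`, normalized,
are the barycentric weights of an odd continuous map `S^(r-1) → ‖B₀(KG(𝓕))‖`.
-/

theorem card_filter_sum_mul_pow_eq_zero_lt {α R : Type*} [CommRing R] [IsDomain R]
    [DecidableEq R] {S : Finset α} {t : α → R} (ht : Set.InjOn t S) {n : ℕ} {v : Fin n → R}
    (hv : v ≠ 0) : #{a ∈ S | ∑ i, v i * t a ^ (i : ℕ) = 0} < n := by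
  set Z := {a ∈ S | ∑ i, v i * t a ^ (i : ℕ) = 0}
  by_contra! hZ
  let e : Fin n ↪ Z := (Fin.castLEEmb hZ).trans Z.equivFin.symm.toEmbedding
  have he : Function.Injective fun j => t (e j) := fun i j hij =>
    e.injective <| Subtype.ext <| ht (mem_filter.1 (e i).2).1 (mem_filter.1 (e j).2).1 hij
  exact hv <| Matrix.eq_zero_of_forall_index_sum_mul_pow_eq_zero he
    fun j => (mem_filter.1 (e j).2).2

theorem hasZ2Map_of_weights {V : Type*} [Fintype V] {G : SimpleGraph V} {h : ℕ}
    (N : V → Metric.sphere (0 : EuclideanSpace ℝ (Fin (h + 1))) 1 → ℝ)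
    (hcont : ∀ v, Continuous (N v)) (hnonneg : ∀ v x, 0 ≤ N v x)
    (hcover : ∀ x, ∃ v, 0 < N v x ∨ 0 < N v (-x))
    (hadj : ∀ x u v, 0 < N u (-x) → 0 < N v x → G.Adj u v) :
    hasZ2Map h G := by
  set w : _ → V × Bool → ℝ := fun x p => N p.1 (cond p.2 x (-x))
  have hw_swap : ∀ x p, w (-x) p = w x (p.1, !p.2) := by
    rintro x ⟨v, _ | _⟩ <;> simp [w]
  have hw_cont : ∀ p, Continuous fun x => w x p := by
    rintro ⟨v, _ | _⟩
    exacts [(hcont v).comp continuous_neg, hcont v]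
  set T := fun x => ∑ p, w x p
  have hT_pos : ∀ x, 0 < T x := fun x => by
    obtain ⟨v, hv | hv⟩ := hcover x
    exacts [sum_pos' (fun p _ => hnonneg _ _) ⟨(v, true), mem_univ _, hv⟩,
      sum_pos' (fun p _ => hnonneg _ _) ⟨(v, false), mem_univ _, hv⟩]
  have hT_neg : ∀ x, T (-x) = T x := fun x => by
    simp only [T, hw_swap]
    exact Fintype.sum_equiv ((Equiv.refl V).prodCongr (Equiv.boolNot)) _ _ fun _ => rfl
  refine ⟨fun x p => w x p / T x, ?_, fun x => ⟨fun p => ?_, ?_, fun u v hu hv => ?_⟩, fun x => ?_⟩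
  · exact continuous_pi fun p => (hw_cont p).div (continuous_finsetSum _ fun p _ => hw_cont p)
      fun x => (hT_pos x).ne'
  · exact div_nonneg (hnonneg _ _) (hT_pos x).le
  · rw [← sum_div, div_self (hT_pos x).ne']
  · exact hadj x u v ((div_pos_iff_of_pos_right (hT_pos x)).1 hu)
      ((div_pos_iff_of_pos_right (hT_pos x)).1 hv)
  · ext p
    simp only [hw_swap, hT_neg]

section

variable {α : Type*} [DecidableEq α] {𝓕 : Finset (Finset α)}

theorem exists_not_bicolored_of_card_lt_cdTwo {Y : Finset α} (hY : #Y < cdTwo 𝓕)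
    (c : α → Fin 2) :
    ∃ F ∈ 𝓕, Disjoint F Y ∧ ¬((∃ a ∈ F, c a = 0) ∧ ∃ b ∈ F, c b = 1) := by
  by_contra! h
  exact Nat.notMem_of_lt_sInf hY ⟨Y, rfl, c, h⟩

theorem exists_forall_pos_or_forall_neg_of_card_lt_cdTwo {Y : Finset α} (hY : #Y < cdTwo 𝓕)
    (f : α → ℝ) (hzero : ∀ F ∈ 𝓕, ∀ a ∈ F, f a = 0 → a ∈ Y) :
    ∃ F ∈ 𝓕, (∀ a ∈ F, 0 < f a) ∨ ∀ a ∈ F, f a < 0 := by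
  obtain ⟨F, hF, hFY, hmono⟩ :=
    exists_not_bicolored_of_card_lt_cdTwo hY fun a => if 0 < f a then 0 else 1
  refine ⟨F, hF, ?_⟩
  have hne : ∀ a ∈ F, f a ≠ 0 := fun a ha h0 =>
    disjoint_left.1 hFY ha (hzero F hF a ha h0)
  by_cases hpos : ∃ a ∈ F, 0 < f a
  · obtain ⟨a, ha, hfa⟩ := hpos
    exact .inl fun b hb => by_contra fun hfb => hmono ⟨⟨a, ha, if_pos hfa⟩, b, hb, if_neg hfb⟩
  · push Not at hpos
    exact .inr fun a ha => (hpos a ha).lt_of_ne (hne a ha)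

theorem kneserGraph_hasZ2Map_of_signs (hne : ∀ F ∈ 𝓕, F.Nonempty) {h : ℕ}
    (g : α → Metric.sphere (0 : EuclideanSpace ℝ (Fin (h + 1))) 1 → ℝ)
    (hcont : ∀ a, Continuous (g a)) (hodd : ∀ a x, g a (-x) = -g a x)
    (hsign : ∀ x, ∃ F ∈ 𝓕, (∀ a ∈ F, 0 < g a x) ∨ ∀ a ∈ F, g a x < 0) :
    hasZ2Map h (kneserGraph 𝓕) := by
  set N := fun (A : {F // F ∈ 𝓕}) x => max ((A : Finset α).inf' (hne _ A.2) (g · x)) 0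
  have hN_pos : ∀ A x, 0 < N A x ↔ ∀ a ∈ (A : Finset α), 0 < g a x := fun A x => by
    simp only [N, lt_max_iff, lt_self_iff_false, or_false, lt_inf'_iff]
  have hN_pos_neg : ∀ A x, 0 < N A (-x) ↔ ∀ a ∈ (A : Finset α), g a x < 0 := fun A x => by
    simp only [hN_pos, hodd, neg_pos]
  refine hasZ2Map_of_weights N (fun A => ?_) (fun _ _ => le_max_right _ _) (fun x => ?_) ?_
  · exact (Continuous.finset_inf'_apply _ fun a _ => hcont a).max continuous_const
  · obtain ⟨F, hF, hpos | hneg⟩ := hsign x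
    exacts [⟨⟨F, hF⟩, .inl ((hN_pos _ _).2 hpos)⟩, ⟨⟨F, hF⟩, .inr ((hN_pos_neg _ _).2 hneg)⟩]
  · intro x u v hu hv
    rw [hN_pos_neg] at hu
    rw [hN_pos] at hv
    have hdisj : Disjoint (u : Finset α) v :=
      disjoint_left.2 fun a hau hav => (hu a hau).not_gt (hv a hav)
    refine ⟨fun huv => ?_, hdisj⟩
    obtain ⟨a, ha⟩ := hne _ u.2
    exact disjoint_left.1 hdisj ha (huv ▸ ha)

end

/-- `coind(B₀(KG(𝓕))) ≥ cd₂(𝓕) - 1`. -/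
theorem stmt14 {α : Type*} [DecidableEq α] (𝓕 : Finset (Finset α))
    (hne : ∀ F ∈ 𝓕, F.Nonempty) (r : ℕ) (hr : cdTwo 𝓕 = r) (hr1 : 1 ≤ r) :
    hasZ2Map (r - 1) (kneserGraph 𝓕) := by
  set S := 𝓕.sup id
  set t : α → ℝ := fun a => S.toList.idxOf a
  have ht : Set.InjOn t S := fun a ha b _ hab =>
    (List.idxOf_inj (mem_toList.2 ha)).1 (Nat.cast_injective hab)
  refine kneserGraph_hasZ2Map_of_signs hne (fun a x => ∑ i, x.1 i * t a ^ (i : ℕ))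
    (fun a => by fun_prop) (fun a x => by simp) fun x => ?_
  have hx : x.1.ofLp ≠ 0 := by
    simpa using ne_zero_of_mem_sphere one_ne_zero x
  refine exists_forall_pos_or_forall_neg_of_card_lt_cdTwo ?_ _
    fun F hF a ha h0 => mem_filter.2 ⟨le_sup (f := id) hF ha, h0⟩
  rw [hr]
  exact (card_filter_sum_mul_pow_eq_zero_lt ht hx).trans_le (by omega)
end

section
/- Let p/q be non-integral with ⌈p/q⌉ even, p ≥ 2q. Color vertex i of the rational complete graph K_{p/q} with color ⌊i/q⌋ + 1. This is a proper coloring with ⌈p/q⌉ colors, and there is no complete bipartite subgraph of K_{p/q} containing all even colors on one side and all odd colors on the other side (each color appearing). -/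
/-- The rational (circular) complete graph `K_{p/q}`: vertices `{0,…,p-1}`,
with `i ~ j` iff `q ≤ |i - j| ≤ p - q`. -/
def ratK (p q : ℕ) : SimpleGraph (Fin p) where
  Adj i j := i ≠ j ∧ q ≤ ((i : ℤ) - (j : ℤ)).natAbs ∧
    ((i : ℤ) - (j : ℤ)).natAbs ≤ p - q
  symm := ⟨by
    intro i j ⟨h1, h2, h3⟩
    have habs : ((j : ℤ) - (i : ℤ)).natAbs = ((i : ℤ) - (j : ℤ)).natAbs := by
      rw [show (j : ℤ) - (i : ℤ) = -((i : ℤ) - (j : ℤ)) by ring, Int.natAbs_neg]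
    exact ⟨h1.symm, by rw [habs]; exact h2, by rw [habs]; exact h3⟩⟩
  loopless := ⟨fun i hi => hi.1 rfl⟩

/-!
Colour class `k` is the block `[(k-1)q, kq)`, so vertices of equal colour are closer than `q`
and cannot be adjacent. Since `q ∤ p`, we have `(t-1)q < p < tq`: the last block is shorter
than `q`. In a biclique with even colours on one side and odd ones on the other, vertices of
consecutive colours lie on opposite sides, hence are adjacent, hence at least `q` apart. Walking
from colour `1` up to colour `t` therefore covers a distance `≥ (t-1)q`, while the endpoints,
being on opposite sides (`t` is even), are adjacent and so at most `p - q` apart: `tq ≤ p`.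
-/

open Finset

theorem lt_mul_and_mul_lt_add_of_ceil_div {p q t : ℕ} (hq : 0 < q) (hnd : ¬ q ∣ p)
    (ht : (t : ℤ) = ⌈(p : ℚ) / (q : ℚ)⌉) : p < t * q ∧ t * q < p + q := by
  have hq' : (0 : ℚ) < q := by exact_mod_cast hq
  obtain ⟨hlo, hhi⟩ := Int.ceil_eq_iff.mp ht.symm
  push_cast at hlo hhi
  rw [lt_div_iff₀ hq'] at hlo
  rw [div_le_iff₀ hq'] at hhi
  have hle : p ≤ t * q := by exact_mod_cast hhi
  refine ⟨hle.lt_of_ne fun h => hnd ⟨t, by rw [h, mul_comm]⟩, ?_⟩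
  exact_mod_cast (by linarith : (t : ℚ) * q < p + q)

theorem exists_mem_add_mul_le {α : Type*} (f : α → ℕ) (A : ℕ → Set α) (q : ℕ) {w₀ : α}
    (h₀ : w₀ ∈ A 0) (n : ℕ) (hne : ∀ k ≤ n, (A k).Nonempty)
    (hstep : ∀ k < n, ∀ u ∈ A k, ∀ v ∈ A (k + 1), f u + q ≤ f v) :
    ∃ w ∈ A n, f w₀ + n * q ≤ f w := by
  induction n with
  | zero => exact ⟨w₀, h₀, by simp⟩
  | succ n ih =>
    obtain ⟨w, hw, hw₀w⟩ := ih (fun k hk => hne k (by omega)) (fun k hk => hstep k (by omega))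
    obtain ⟨v, hv⟩ := hne (n + 1) le_rfl
    refine ⟨v, hv, ?_⟩
    calc f w₀ + (n + 1) * q = (f w₀ + n * q) + q := by ring
      _ ≤ f w + q := by gcongr
      _ ≤ f v := hstep n (by omega) w hw v hv

theorem SimpleGraph.adj_of_even_of_not_even_succ {V : Type*} {G : SimpleGraph V} {c : V → ℕ}
    {L M : Finset V} (hadj : ∀ u ∈ L, ∀ v ∈ M, G.Adj u v) (hL : ∀ u ∈ L, Even (c u))
    (hM : ∀ v ∈ M, ¬ Even (c v)) {u v : V} (hu : u ∈ L ∨ u ∈ M) (hv : v ∈ L ∨ v ∈ M)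
    (huv : c v = c u + 1) : G.Adj u v := by
  rcases hu with hu | hu <;> rcases hv with hv | hv
  · exact (Nat.even_add_one.mp (huv ▸ hL v hv) (hL u hu)).elim
  · exact hadj u hu v hv
  · exact (hadj v hv u hu).symm
  · exact absurd (Nat.even_add_one.mpr (hM u hu)) (huv ▸ hM v hv)

def blockColor {p : ℕ} (q : ℕ) (i : Fin p) : ℕ := i.val / q + 1

section blockColor

variable {p q t : ℕ}

theorem ratK_blockColor_ne (hq : 0 < q) {i j : Fin p} (h : (ratK p q).Adj i j) :
    blockColor q i ≠ blockColor q j := by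
  intro hij
  have hdiv : i.val / q = j.val / q := Nat.succ_injective hij
  have hi := Nat.div_add_mod i.val q
  have hj := Nat.div_add_mod j.val q
  have := Nat.mod_lt i.val hq
  have := Nat.mod_lt j.val hq
  have := h.2.1
  rw [hdiv] at hi
  omega

theorem ratK_add_le_of_div_lt {i j : Fin p} (h : (ratK p q).Adj i j)
    (hij : i.val / q < j.val / q) : i.val + q ≤ j.val := by
  have hlt : i.val < j.val := lt_of_not_ge fun hji => (Nat.div_le_div_right hji).not_gt hij
  have := h.2.1
  omega

theorem image_blockColor_eq_Icc (hq : 0 < q) (hlo : p ≤ t * q) (hhi : t * q < p + q) :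
    (univ : Finset (Fin p)).image (blockColor q) = Icc 1 t := by
  ext a
  simp only [mem_image, mem_univ, true_and, mem_Icc, blockColor]
  constructor
  · rintro ⟨i, rfl⟩
    exact ⟨le_add_self, Nat.div_lt_iff_lt_mul hq |>.mpr (i.isLt.trans_le hlo)⟩
  · rintro ⟨ha, hat⟩
    obtain ⟨b, rfl⟩ := Nat.exists_eq_add_of_le' ha
    have : (b + 1) * q ≤ t * q := Nat.mul_le_mul_right q hat
    refine ⟨⟨b * q, by rw [add_one_mul] at this; omega⟩, ?_⟩
    simp [Nat.mul_div_cancel b hq]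

theorem false_of_ratK_parity_biclique (hq : 0 < q) (hp : p < t * q) (ht : Even t)
    {L M : Finset (Fin p)} (hadj : ∀ u ∈ L, ∀ v ∈ M, (ratK p q).Adj u v)
    (hL : L.image (blockColor q) = (Icc 1 t).filter (fun x => Even x))
    (hM : M.image (blockColor q) = (Icc 1 t).filter (fun x => ¬ Even x)) : False := by
  have hLeven : ∀ u ∈ L, Even (blockColor q u) := fun u hu =>
    (mem_filter.mp (hL.subset (mem_image_of_mem _ hu))).2
  have hModd : ∀ v ∈ M, ¬ Even (blockColor q v) := fun v hv =>
    (mem_filter.mp (hM.subset (mem_image_of_mem _ hv))).2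
  have hcover : ∀ k ∈ Icc 1 t, ∃ v, (v ∈ L ∨ v ∈ M) ∧ blockColor q v = k := by
    intro k hk
    by_cases hke : Even k
    · obtain ⟨v, hv, hvk⟩ := mem_image.mp (hL.superset (mem_filter.mpr ⟨hk, hke⟩))
      exact ⟨v, .inl hv, hvk⟩
    · obtain ⟨v, hv, hvk⟩ := mem_image.mp (hM.superset (mem_filter.mpr ⟨hk, hke⟩))
      exact ⟨v, .inr hv, hvk⟩
  obtain ⟨n, rfl⟩ := Nat.exists_eq_add_one_of_ne_zero (show t ≠ 0 by rintro rfl; simp at hp)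
  -- excludes `p < q`, where `p - q` truncates to `0`
  have hn : q ≤ n * q :=
    Nat.le_mul_of_pos_left q (Nat.pos_of_ne_zero (by rintro rfl; simp at ht))
  set A : ℕ → Set (Fin p) := fun k => {v | (v ∈ L ∨ v ∈ M) ∧ v.val / q = k}
  obtain ⟨w₀, hw₀M, hw₀⟩ := mem_image.mp (hM.superset (show 1 ∈ _ by simp))
  have hw₀A : w₀ ∈ A 0 := ⟨.inr hw₀M, by simpa [blockColor] using hw₀⟩
  obtain ⟨w, ⟨hwLM, hw⟩, hfar⟩ := exists_mem_add_mul_le Fin.val A q hw₀A n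
    (fun k hk => by
      obtain ⟨v, hv, hvk⟩ := hcover (k + 1) (by simp; omega)
      exact ⟨v, hv, by simpa [blockColor] using hvk⟩)
    (fun k _ u ⟨hu, huk⟩ v ⟨hv, hvk⟩ => ratK_add_le_of_div_lt
      ((ratK p q).adj_of_even_of_not_even_succ hadj hLeven hModd hu hv
        (by simp [blockColor, huk, hvk])) (by omega))
  have hwL : w ∈ L := by
    refine hwLM.resolve_right fun hwM => hModd w hwM ?_
    simpa [blockColor, hw] using ht
  have hclose := (hadj w hwL w₀ hw₀M).2.2
  have := w.isLt
  rw [add_one_mul] at hp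
  omega

end blockColor

theorem stmt16_general (p q t : ℕ) (hq : 0 < q) (hnd : ¬ q ∣ p)
    (ht : (t : ℤ) = ⌈(p : ℚ) / (q : ℚ)⌉) (hteven : Even t)
    (c : Fin p → ℕ) (hcdef : c = fun i : Fin p => i.val / q + 1) :
    (∀ i j, (ratK p q).Adj i j → c i ≠ c j) ∧
    (Finset.univ.image c = Finset.Icc 1 t) ∧
    ¬ ∃ L M : Finset (Fin p),
        (∀ u ∈ L, ∀ v ∈ M, (ratK p q).Adj u v) ∧
        L.image c = (Finset.Icc 1 t).filter (fun x => Even x) ∧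
        M.image c = (Finset.Icc 1 t).filter (fun x => ¬ Even x) := by
  obtain ⟨hlo, hhi⟩ := lt_mul_and_mul_lt_add_of_ceil_div hq hnd ht
  have hc : c = blockColor q := hcdef
  subst hc
  exact ⟨fun i j h => ratK_blockColor_ne hq h, image_blockColor_eq_Icc hq hlo.le hhi,
    fun ⟨L, M, hadj, hL, hM⟩ => false_of_ratK_parity_biclique hq hlo hteven hadj hL hM⟩

/-- For `p/q` non-integral with `⌈p/q⌉` even, the coloring `i ↦ ⌊i/q⌋ + 1` of
`K_{p/q}` is a proper coloring with `⌈p/q⌉` colors containing no completely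
multicolored complete bipartite subgraph with all even colors on one side and
all odd colors on the other. -/
theorem stmt16 (p q t : ℕ) (hq : 0 < q) (hpq : 2 * q ≤ p) (hnd : ¬ q ∣ p)
    (ht : (t : ℤ) = ⌈(p : ℚ) / (q : ℚ)⌉) (hteven : Even t)
    (c : Fin p → ℕ) (hcdef : c = fun i : Fin p => i.val / q + 1) :
    (∀ i j, (ratK p q).Adj i j → c i ≠ c j) ∧
    (Finset.univ.image c = Finset.Icc 1 t) ∧
    ¬ ∃ L M : Finset (Fin p),
        (∀ u ∈ L, ∀ v ∈ M, (ratK p q).Adj u v) ∧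
        L.image c = (Finset.Icc 1 t).filter (fun x => Even x) ∧
        M.image c = (Finset.Icc 1 t).filter (fun x => ¬ Even x) :=
  stmt16_general p q t hq hnd ht hteven c hcdef
end

section
/- If F consists of all k-element subsets of an n-element set with k < n/2, then cd_2(F) = n - 2k + 2. -/
open Finset

/-!
Under a 2-colouring, every `k`-subset of a set `S` meets both colours exactly when both colour
classes of `S` have fewer than `k` points, which is possible iff `#S ≤ 2 (k - 1)`. So a set `Y`
of deleted points works iff its complement has at most `2k - 2` points, and the least such `#Y`
is `n - (2k - 2)`.
-/

section Bichromatic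

variable {α : Type*}

theorem forall_subset_bichromatic_iff {S : Finset α} {c : α → Fin 2} {k : ℕ} :
    (∀ F ⊆ S, #F = k → (∃ a ∈ F, c a = 0) ∧ ∃ b ∈ F, c b = 1) ↔
      ∀ i, #{a ∈ S | c a = i} < k := by
  constructor
  · intro h i
    by_contra! hle
    obtain ⟨F, hFS, hF⟩ := exists_subset_card_eq hle
    obtain ⟨⟨a, ha, ha0⟩, b, hb, hb1⟩ := h F (hFS.trans (filter_subset _ _)) hF
    have hai : c a = i := (mem_filter.1 (hFS ha)).2
    have hbi : c b = i := (mem_filter.1 (hFS hb)).2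
    exact absurd (ha0.symm.trans (hai.trans (hbi.symm.trans hb1))) (by decide)
  · intro h F hFS hF
    have fin_two_ne : ∀ x i : Fin 2, x ≠ i → x = i + 1 := by decide
    have meets_color : ∀ i, ∃ a ∈ F, c a = i := by
      intro i
      by_contra! hF_avoids
      have hF_sub : F ⊆ {a ∈ S | c a = i + 1} := fun a ha =>
        mem_filter.2 ⟨hFS ha, fin_two_ne _ _ (hF_avoids a ha)⟩
      exact (card_le_card hF_sub).not_gt (hF ▸ h (i + 1))
    exact ⟨meets_color 0, meets_color 1⟩

variable [DecidableEq α]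

theorem exists_bichromatic_coloring_iff {S : Finset α} {k : ℕ} (hk : 1 ≤ k) :
    (∃ c : α → Fin 2, ∀ F ⊆ S, #F = k → (∃ a ∈ F, c a = 0) ∧ ∃ b ∈ F, c b = 1) ↔
      #S ≤ 2 * (k - 1) := by
  simp_rw [forall_subset_bichromatic_iff]
  constructor
  · rintro ⟨c, hc⟩
    have hS : #S = ∑ i : Fin 2, #{a ∈ S | c a = i} :=
      card_eq_sum_card_fiberwise fun a _ => mem_univ (c a)
    rw [hS, Fin.sum_univ_two]
    have := hc 0
    have := hc 1
    omega
  · intro hS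
    obtain ⟨A, hAS, hA⟩ := exists_subset_card_eq (min_le_right (k - 1) #S)
    refine ⟨fun a => if a ∈ A then 0 else 1, Fin.forall_fin_two.2 ⟨?_, ?_⟩⟩
    · simp only [ite_eq_left_iff, one_ne_zero, imp_false, not_not, filter_mem_eq_inter,
        inter_eq_right.2 hAS, hA]
      omega
    · simp only [ite_eq_right_iff, zero_ne_one, imp_false, filter_notMem_eq_sdiff,
        card_sdiff_of_subset hAS, hA]
      omega

variable [Fintype α]

theorem exists_bichromatic_coloring_powersetCard_iff {k : ℕ} (hk : 1 ≤ k) (Y : Finset α) :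
    (∃ c : α → Fin 2, ∀ F ∈ (univ : Finset α).powersetCard k, Disjoint F Y →
        (∃ a ∈ F, c a = 0) ∧ ∃ b ∈ F, c b = 1) ↔
      Fintype.card α - 2 * (k - 1) ≤ #Y := by
  calc _ ↔ ∃ c : α → Fin 2, ∀ F ⊆ Yᶜ, #F = k → (∃ a ∈ F, c a = 0) ∧ ∃ b ∈ F, c b = 1 := by
        simp only [mem_powersetCard, subset_univ, true_and, ← subset_compl_iff_disjoint_right]
        exact exists_congr fun c => forall_congr' fun F => imp.swap
    _ ↔ #Yᶜ ≤ 2 * (k - 1) := exists_bichromatic_coloring_iff hk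
    _ ↔ _ := by rw [card_compl]; omega

theorem cdTwo_powersetCard_univ {k : ℕ} (hk : 1 ≤ k) :
    cdTwo ((univ : Finset α).powersetCard k) = Fintype.card α - 2 * (k - 1) := by
  refine IsLeast.csInf_eq ⟨?_, ?_⟩
  · obtain ⟨Y, -, hY⟩ := exists_subset_card_eq (s := (univ : Finset α))
      (n := Fintype.card α - 2 * (k - 1)) (by simp)
    exact ⟨Y, hY, (exists_bichromatic_coloring_powersetCard_iff hk Y).2 hY.ge⟩
  · rintro m ⟨Y, rfl, hY⟩
    exact (exists_bichromatic_coloring_powersetCard_iff hk Y).1 hY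

end Bichromatic

/-- For the family of all `k`-subsets of an `n`-set with `k < n/2`,
the 2-colorability defect equals `n - 2k + 2`. -/
theorem stmt19 (n k : ℕ) (hk : 1 ≤ k) (hkn : 2 * k < n) :
    cdTwo ((Finset.univ : Finset (Fin n)).powersetCard k) = n - 2 * k + 2 := by
  rw [cdTwo_powersetCard_univ hk, Fintype.card_fin]
  omega
end
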